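/- arXiv:2002.12422 — 7 statements merged into one kernel-verified Lean document; each statement's English description precedes it below -/
import Mathlib

section
/- Let (X,d) be a metric space and let δ be an asymmetric metric on X satisfying condition (bl). Then the map ι : X → (X → ℝ) given by ι(p) = δ(p,·) (i.e. ι(p)(x) = δ(p,x)) is a topological embedding, where the space of real-valued functions on X carries the product topology (the topology of pointwise convergence). -/
/-!
Upper bound `δ ≤ β d` together with the triangle inequality makes every coordinate `p ↦ δ(p, x)`
Lipschitz, so `ι` is continuous. Conversely, pointwise convergence `δ(pₙ, ·) → δ(a, ·)` gives in
particular `δ(pₙ, a) → δ(a, a) = 0`, and the lower bound `d ≤ α δ` turns this into `pₙ → a`.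
-/

open Filter Topology

section

variable {X : Type*} [PseudoMetricSpace X] {δ : X → X → ℝ}

theorem lipschitzWith_left_of_le_mul_dist (htri : ∀ u v w, δ u w ≤ δ u v + δ v w) {β : ℝ}
    (hle : ∀ p q, δ p q ≤ β * dist p q) (x : X) :
    LipschitzWith β.toNNReal (fun p => δ p x) :=
  LipschitzWith.of_le_add_mul' β fun p q => by linarith [htri p q x, hle p q]

theorem tendsto_of_dist_le_mul_of_tendsto_zero {ι : Type*} {l : Filter ι} {f : ι → X}
    {g : ι → ℝ} {a : X} {α : ℝ} (hle : ∀ i, dist (f i) a ≤ α * g i)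
    (hg : Tendsto g l (𝓝 0)) : Tendsto f l (𝓝 a) :=
  tendsto_iff_dist_tendsto_zero.2 <|
    squeeze_zero (fun _ => dist_nonneg) hle (by simpa using hg.const_mul α)

theorem isInducing_left_of_dist_le_mul (hcont : ∀ x, Continuous fun p => δ p x)
    (hself : ∀ a, δ a a = 0) {α : ℝ} (hle : ∀ p q, dist p q ≤ α * δ p q) :
    IsInducing (fun p x => δ p x : X → X → ℝ) := by
  refine isInducing_iff_nhds.2 fun a =>
    le_antisymm (continuous_pi hcont).continuousAt.le_comap ?_
  have hcoord : Tendsto (fun p => δ p a)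
      (comap (fun p x => δ p x : X → X → ℝ) (𝓝 fun x => δ a x)) (𝓝 0) :=
    hself a ▸ ((continuous_apply a).tendsto _).comp tendsto_comap
  exact tendsto_of_dist_le_mul_of_tendsto_zero (fun p => hle p a) hcoord

end

theorem gromov_map_embedding_pointwise_general
    {X : Type*} [MetricSpace X] (δ : X → X → ℝ)
    (hzero : ∀ u v, δ u v = 0 ↔ u = v)
    (htri : ∀ u v w, δ u w ≤ δ u v + δ v w)
    (hbl : ∃ α > (0 : ℝ), ∃ β > (0 : ℝ), ∀ p q,
      dist p q ≤ α * δ p q ∧ δ p q ≤ β * dist p q) :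
    Topology.IsEmbedding (fun p : X => (fun x => δ p x : X → ℝ)) := by
  obtain ⟨α, -, β, -, hbl⟩ := hbl
  have hself : ∀ a, δ a a = 0 := fun a => (hzero a a).2 rfl
  have hcont : ∀ x, Continuous fun p => δ p x := fun x =>
    (lipschitzWith_left_of_le_mul_dist htri (fun p q => (hbl p q).2) x).continuous
  refine ⟨isInducing_left_of_dist_le_mul hcont hself (fun p q => (hbl p q).1), fun p q h => ?_⟩
  exact (hzero p q).1 (by simpa [hself] using congrFun h q)

/-- Let `(X,d)` be a metric space and `δ` an asymmetric metric on `X`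
satisfying condition (bl). Then the map `p ↦ δ(p,·)` is a topological embedding of `X`
into the space of real-valued functions on `X` with the topology of pointwise convergence
(the product topology). -/
theorem gromov_map_embedding_pointwise
    {X : Type*} [MetricSpace X] (δ : X → X → ℝ)
    (hpos : ∀ u v, 0 ≤ δ u v)
    (hzero : ∀ u v, δ u v = 0 ↔ u = v)
    (htri : ∀ u v w, δ u w ≤ δ u v + δ v w)
    (hbl : ∃ α > (0 : ℝ), ∃ β > (0 : ℝ), ∀ p q,
      dist p q ≤ α * δ p q ∧ δ p q ≤ β * dist p q) :
    Topology.IsEmbedding (fun p : X => (fun x => δ p x : X → ℝ)) :=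
  gromov_map_embedding_pointwise_general δ hzero htri hbl
end

section
/- Let (X,d) be a metric space, let o ∈ X, and let δ be an asymmetric metric on X satisfying conditions (bl) and (ic). Then the map X → (X → ℝ) given by p ↦ (x ↦ δ(p,x) − δ(p,o)) is a topological embedding, where the space of real-valued functions on X carries the topology of uniform convergence on bounded subsets of X. -/
/-!
The triangle inequality makes `p ↦ δ(p, ·)` Lipschitz for the sup-distance, with constant `β`
from (bl); hence the map is continuous, even for uniform convergence on all of `X`.
Conversely, if `δ(q, p) ≥ s`, condition (ic) gives a point `z` between `q` and `p` with
`δ(z, p) = s`, so `z` lies in the closed ball of radius `α s` about `p`, and the normalized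
functions of `p` and `q` differ by at least `s / 2` at `z` or at `p`. Thus uniform closeness on
balls about `p` forces `q` to be close to `p`; a metric space being T₀, the map is an embedding.
-/

open Bornology

section

open Filter Topology Metric

variable {X : Type*} {δ : X → X → ℝ}

def gromovFun (δ : X → X → ℝ) (o p : X) : X → ℝ := fun x => δ p x - δ p o

def IntervalCondition (δ : X → X → ℝ) : Prop :=
  ∀ p q : X, ∀ s : ℝ, s ∈ Set.Icc 0 (δ p q) → ∃ z : X, δ p q = δ p z + δ z q ∧ δ p z = s

theorem exists_le_abs_gromovFun_sub_add (hpos : ∀ u v, 0 ≤ δ u v) (hic : IntervalCondition δ)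
    (o : X) {p q : X} (hpp : δ p p = 0) {s : ℝ} (hs : s ∈ Set.Icc 0 (δ q p)) :
    ∃ z, δ z p = s ∧ s ≤ |gromovFun δ o q z - gromovFun δ o p z| +
      |gromovFun δ o q p - gromovFun δ o p p| := by
  obtain ⟨z, hsplit, hqz⟩ := hic q p (δ q p - s) ⟨by linarith [hs.2], by linarith [hs.1]⟩
  refine ⟨z, by linarith, ?_⟩
  have hsum : (gromovFun δ o p z - gromovFun δ o q z) + (gromovFun δ o q p - gromovFun δ o p p)
      = s + δ p z := by
    simp only [gromovFun]; linarith
  calc s ≤ s + δ p z := le_add_of_nonneg_right (hpos p z)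
    _ = _ := hsum.symm
    _ ≤ _ := by
      rw [abs_sub_comm (gromovFun δ o q z)]
      exact add_le_add (le_abs_self _) (le_abs_self _)

section PseudoMetricSpace

variable [PseudoMetricSpace X]

theorem abs_sub_le_mul_dist_of_triangle (htri : ∀ u v w, δ u w ≤ δ u v + δ v w) {β : ℝ}
    (hβ : ∀ u v, δ u v ≤ β * dist u v) (p q x : X) : |δ q x - δ p x| ≤ β * dist p q := by
  rw [abs_sub_le_iff]
  constructor
  · linarith [htri q p x, dist_comm q p ▸ hβ q p]
  · linarith [htri p q x, hβ p q]

theorem abs_gromovFun_sub_le (htri : ∀ u v w, δ u w ≤ δ u v + δ v w) {β : ℝ}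
    (hβ : ∀ u v, δ u v ≤ β * dist u v) (o p q x : X) :
    |gromovFun δ o q x - gromovFun δ o p x| ≤ 2 * β * dist p q := by
  calc |gromovFun δ o q x - gromovFun δ o p x|
      = |(δ q x - δ p x) - (δ q o - δ p o)| := by simp only [gromovFun]; ring_nf
    _ ≤ |δ q x - δ p x| + |δ q o - δ p o| := abs_sub _ _
    _ ≤ β * dist p q + β * dist p q :=
      add_le_add (abs_sub_le_mul_dist_of_triangle htri hβ p q x)
        (abs_sub_le_mul_dist_of_triangle htri hβ p q o)
    _ = 2 * β * dist p q := by ring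

theorem tendstoUniformly_gromovFun (htri : ∀ u v w, δ u w ≤ δ u v + δ v w) {β : ℝ}
    (hβ : ∀ u v, δ u v ≤ β * dist u v) (o p : X) :
    TendstoUniformly (gromovFun δ o) (gromovFun δ o p) (𝓝 p) := by
  have hlim : Tendsto (fun q => 2 * β * dist p q) (𝓝 p) (𝓝 0) := by
    simpa using ((tendsto_const_nhds (x := p)).dist (tendsto_id (x := 𝓝 p))).const_mul (2 * β)
  refine Metric.tendstoUniformly_iff.2 fun ε hε => ?_
  filter_upwards [hlim.eventually (gt_mem_nhds hε)] with q hq x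
  rw [Real.dist_eq, abs_sub_comm]
  exact (abs_gromovFun_sub_le htri hβ o p q x).trans_lt hq

theorem continuous_ofFun_gromovFun (htri : ∀ u v w, δ u w ≤ δ u v + δ v w) {β : ℝ}
    (hβ : ∀ u v, δ u v ≤ β * dist u v) (o : X) (𝔖 : Set (Set X)) :
    Continuous fun p => UniformOnFun.ofFun 𝔖 (gromovFun δ o p) :=
  continuous_iff_continuousAt.2 fun p => UniformOnFun.tendsto_iff_tendstoUniformlyOn.2
    fun _ _ => (tendstoUniformly_gromovFun htri hβ o p).tendstoUniformlyOn

theorem dist_lt_of_forall_abs_gromovFun_sub_lt (hpos : ∀ u v, 0 ≤ δ u v)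
    (hic : IntervalCondition δ) {α : ℝ} (hα0 : 0 < α) (hα : ∀ u v, dist u v ≤ α * δ u v)
    (o : X) {p q : X} (hpp : δ p p = 0) {R : ℝ} (hR : 0 < R)
    (h : ∀ x ∈ closedBall p R, |gromovFun δ o q x - gromovFun δ o p x| < R / (2 * α)) :
    dist q p < R := by
  have hδ : δ q p < R / α := by
    by_contra! hle
    obtain ⟨z, hzp, hsum⟩ :=
      exists_le_abs_gromovFun_sub_add hpos hic o hpp ⟨by positivity, hle⟩
    have hz : z ∈ closedBall p R := by
      rw [mem_closedBall]
      calc dist z p ≤ α * δ z p := hα z p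
        _ = R := by rw [hzp]; field_simp
    have hhalf : R / (2 * α) + R / (2 * α) = R / α := by field_simp; ring
    linarith [h z hz, h p (mem_closedBall_self hR.le)]
  calc dist q p ≤ α * δ q p := hα q p
    _ < α * (R / α) := by gcongr
    _ = R := by field_simp

theorem comap_nhds_ofFun_gromovFun_le (hpos : ∀ u v, 0 ≤ δ u v)
    (hic : IntervalCondition δ) {α : ℝ} (hα0 : 0 < α) (hα : ∀ u v, dist u v ≤ α * δ u v)
    (o : X) {p : X} (hpp : δ p p = 0) {𝔖 : Set (Set X)} (h𝔖 : ∀ r, closedBall p r ∈ 𝔖) :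
    comap (fun q => UniformOnFun.ofFun 𝔖 (gromovFun δ o q))
      (𝓝 (UniformOnFun.ofFun 𝔖 (gromovFun δ o p))) ≤ 𝓝 p := by
  refine nhds_basis_ball.ge_iff.2 fun R hR => mem_comap.2 ⟨_, UniformOnFun.gen_mem_nhds ℝ 𝔖 _
    (h𝔖 R) (dist_mem_uniformity (by positivity : 0 < R / (2 * α))), fun q hq => ?_⟩
  refine dist_lt_of_forall_abs_gromovFun_sub_lt hpos hic hα0 hα o hpp hR fun x hx => ?_
  rw [abs_sub_comm, ← Real.dist_eq]
  exact hq x hx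

end PseudoMetricSpace

theorem isEmbedding_ofFun_gromovFun [MetricSpace X]
    (hpos : ∀ u v, 0 ≤ δ u v) (hpp : ∀ u, δ u u = 0)
    (htri : ∀ u v w, δ u w ≤ δ u v + δ v w)
    (hic : IntervalCondition δ)
    {α β : ℝ} (hα0 : 0 < α) (hα : ∀ u v, dist u v ≤ α * δ u v)
    (hβ : ∀ u v, δ u v ≤ β * dist u v) (o : X) {𝔖 : Set (Set X)}
    (h𝔖 : ∀ p r, closedBall p r ∈ 𝔖) :
    IsEmbedding fun p => UniformOnFun.ofFun 𝔖 (gromovFun δ o p) :=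
  IsInducing.isEmbedding <| isInducing_iff_nhds.2 fun p =>
    le_antisymm ((continuous_ofFun_gromovFun htri hβ o 𝔖).tendsto p).le_comap
      (comap_nhds_ofFun_gromovFun_le hpos hic hα0 hα o (hpp p) (h𝔖 p))

end

/-- Let `(X,d)` be a metric space, `o ∈ X`, and `δ` an asymmetric metric on
`X` satisfying conditions (bl) and (ic). Then the map `p ↦ (x ↦ δ(p,x) − δ(p,o))` is a
topological embedding of `X` into the space of real-valued functions on `X` carrying the
topology of uniform convergence on bounded subsets of `X`. -/
theorem normalized_gromov_map_embedding
    {X : Type*} [MetricSpace X] (o : X) (δ : X → X → ℝ)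
    (hpos : ∀ u v, 0 ≤ δ u v)
    (hzero : ∀ u v, δ u v = 0 ↔ u = v)
    (htri : ∀ u v w, δ u w ≤ δ u v + δ v w)
    (hbl : ∃ α > (0 : ℝ), ∃ β > (0 : ℝ), ∀ p q,
      dist p q ≤ α * δ p q ∧ δ p q ≤ β * dist p q)
    (hic : ∀ p q : X, ∀ s : ℝ, s ∈ Set.Icc 0 (δ p q) →
      ∃ z : X, δ p q = δ p z + δ z q ∧ δ p z = s) :
    Topology.IsEmbedding (fun p : X =>
      UniformOnFun.ofFun {s : Set X | IsBounded s} (fun x => δ p x - δ p o)) := by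
  obtain ⟨α, hα0, β, -, hαβ⟩ := hbl
  exact isEmbedding_ofFun_gromovFun hpos (fun u => (hzero u u).2 rfl) htri hic hα0
    (fun u v => (hαβ u v).1) (fun u v => (hαβ u v).2) o fun _ _ => Metric.isBounded_closedBall
end

section
/- Let (X,d) be a metric space, let o ∈ X, and let δ be an asymmetric metric on X satisfying condition (bl). Then the set F = {x ↦ δ(p,x) − δ(p,o) : p ∈ X} of real-valued functions on X has compact closure in the space of continuous real-valued functions on X with the topology of uniform convergence on compact subsets of X; moreover, this closure coincides as a set with the closure of F in the product topology (the topology of pointwise convergence). -/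
open Set NNReal

/-!
The triangle inequality for `δ` together with `δ ≤ β d` makes every `x ↦ δ(p,x) − δ(p,o)`
`β`-Lipschitz and zero at `o`. Such functions take values in `[-β d(x,o), β d(x,o)]` at `x`, so by
Tychonoff they form a pointwise compact family; being equicontinuous, the family is also compact
for the compact-open topology (Arzelà–Ascoli). A continuous image of the compact closure of `F` is
closed, which identifies the two closures.
-/

theorem isCompact_setOf_lipschitzWith_and_apply_eq {X Y : Type*} [PseudoMetricSpace X]
    [MetricSpace Y] [ProperSpace Y] (K : ℝ≥0) (x₀ : X) (y₀ : Y) :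
    IsCompact {g : X → Y | LipschitzWith K g ∧ g x₀ = y₀} := by
  have hbox : IsCompact (univ.pi fun x => Metric.closedBall y₀ (K * dist x x₀)) :=
    isCompact_univ_pi fun x => isCompact_closedBall y₀ _
  refine hbox.of_isClosed_subset ?_ ?_
  · exact (isClosed_setOfPred_lipschitzWith K).inter (isClosed_eq (continuous_apply x₀)
      continuous_const)
  · rintro g ⟨hg, rfl⟩ x -
    exact hg.dist_le_mul x x₀

theorem ContinuousMap.isCompact_setOf_lipschitzWith_and_apply_eq {X Y : Type*}
    [PseudoMetricSpace X] [MetricSpace Y] [ProperSpace Y] (K : ℝ≥0) (x₀ : X) (y₀ : Y) :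
    IsCompact {f : C(X, Y) | LipschitzWith K f ∧ f x₀ = y₀} := by
  set L := {f : C(X, Y) | LipschitzWith K f ∧ f x₀ = y₀}
  have himage : ContinuousMap.toFun '' L = {g : X → Y | LipschitzWith K g ∧ g x₀ = y₀} := by
    ext g
    refine ⟨?_, fun hg => ⟨⟨g, hg.1.continuous⟩, hg, rfl⟩⟩
    rintro ⟨f, hf, rfl⟩
    exact hf
  refine ArzelaAscoli.isCompact_of_equicontinuous L ?_ ?_
  · rw [himage]
    exact _root_.isCompact_setOf_lipschitzWith_and_apply_eq K x₀ y₀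
  · exact (LipschitzWith.uniformEquicontinuous _ K fun f => f.2.1).equicontinuous

theorem lipschitzWith_sub_const_of_le_mul_dist {X : Type*} [PseudoMetricSpace X]
    {δ : X → X → ℝ} {K : ℝ≥0} (htri : ∀ u v w, δ u w ≤ δ u v + δ v w)
    (hle : ∀ u v, δ u v ≤ K * dist u v) (p : X) (c : ℝ) :
    LipschitzWith K fun x => δ p x - c := by
  refine LipschitzWith.of_dist_le_mul fun x y => ?_
  rw [dist_sub_right, Real.dist_eq, abs_sub_le_iff]
  constructor
  · linarith [htri p y x, dist_comm x y ▸ hle y x]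
  · linarith [htri p x y, hle x y]

theorem normalized_distance_functions_compact_closure_general
    {X : Type*} [MetricSpace X] (o : X) (δ : X → X → ℝ)
    (htri : ∀ u v w, δ u w ≤ δ u v + δ v w)
    (hbl : ∃ α > (0 : ℝ), ∃ β > (0 : ℝ), ∀ p q,
      dist p q ≤ α * δ p q ∧ δ p q ≤ β * dist p q) :
    IsCompact (closure {f : C(X, ℝ) | ∃ p : X, ∀ x, f x = δ p x - δ p o}) ∧
    (fun f : C(X, ℝ) => (f : X → ℝ)) ''
        closure {f : C(X, ℝ) | ∃ p : X, ∀ x, f x = δ p x - δ p o}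
      = closure {g : X → ℝ | ∃ p : X, g = fun x => δ p x - δ p o} := by
  obtain ⟨_, -, β, hβ, hdist⟩ := hbl
  lift β to ℝ≥0 using hβ.le
  set F := {f : C(X, ℝ) | ∃ p : X, ∀ x, f x = δ p x - δ p o}
  have hlip (p : X) : LipschitzWith β fun x => δ p x - δ p o :=
    lipschitzWith_sub_const_of_le_mul_dist htri (fun u v => (hdist u v).2) p _
  have hF : F ⊆ {f : C(X, ℝ) | LipschitzWith β f ∧ f o = 0} := by
    rintro f ⟨p, hp⟩
    exact ⟨funext hp ▸ hlip p, by rw [hp, sub_self]⟩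
  have hcpt : IsCompact (closure F) :=
    (ContinuousMap.isCompact_setOf_lipschitzWith_and_apply_eq β o 0).closure_of_subset hF
  refine ⟨hcpt, ?_⟩
  rw [image_closure_of_isCompact hcpt continuous_coeFun.continuousOn]
  congr 1
  ext g
  constructor
  · rintro ⟨f, ⟨p, hp⟩, rfl⟩
    exact ⟨p, funext hp⟩
  · rintro ⟨p, rfl⟩
    exact ⟨⟨_, (hlip p).continuous⟩, ⟨p, fun x => rfl⟩, rfl⟩

/-- Let `(X,d)` be a metric space, `o ∈ X`, and `δ` an asymmetric metric on
`X` satisfying condition (bl). Then the set `F = {x ↦ δ(p,x) − δ(p,o) : p ∈ X}` has compact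
closure in `C(X,ℝ)` with the compact-open topology (= topology of uniform convergence on
compact sets), and this closure coincides as a set of functions with the closure of `F` in
the product topology on `X → ℝ`. -/
theorem normalized_distance_functions_compact_closure
    {X : Type*} [MetricSpace X] (o : X) (δ : X → X → ℝ)
    (hpos : ∀ u v, 0 ≤ δ u v)
    (hzero : ∀ u v, δ u v = 0 ↔ u = v)
    (htri : ∀ u v w, δ u w ≤ δ u v + δ v w)
    (hbl : ∃ α > (0 : ℝ), ∃ β > (0 : ℝ), ∀ p q,
      dist p q ≤ α * δ p q ∧ δ p q ≤ β * dist p q) :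
    IsCompact (closure {f : C(X, ℝ) | ∃ p : X, ∀ x, f x = δ p x - δ p o}) ∧
    (fun f : C(X, ℝ) => (f : X → ℝ)) ''
        closure {f : C(X, ℝ) | ∃ p : X, ∀ x, f x = δ p x - δ p o}
      = closure {g : X → ℝ | ∃ p : X, g = fun x => δ p x - δ p o} :=
  normalized_distance_functions_compact_closure_general o δ htri hbl
end

section
/- Let L ⊆ K be a dual face and let w ∈ V. Then ν_L(u − w) − ν_L(−w) = ν_L(u) holds for all u ∈ V if and only if w ∈ H_L. -/
open Bornology

/-- The polyhedral asymmetric norm `ν(u) = max {ξ_k(u) : k ∈ K}`. -/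
noncomputable def nu {V : Type*} [AddCommGroup V] [Module ℝ V] {m : ℕ}
    (ξ : Fin (m + 1) → V →ₗ[ℝ] ℝ) (u : V) : ℝ :=
  Finset.univ.sup' Finset.univ_nonempty fun k => ξ k u

/-- `ν_L(u) = max {ξ_ℓ(u) : ℓ ∈ L}` (junk value `0` for `L = ∅`). -/
noncomputable def nuL {V : Type*} [AddCommGroup V] [Module ℝ V] {m : ℕ}
    (ξ : Fin (m + 1) → V →ₗ[ℝ] ℝ) (L : Finset (Fin (m + 1))) (u : V) : ℝ :=
  if h : L.Nonempty then L.sup' h fun ℓ => ξ ℓ u else 0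

/-- `L ⊆ K` is a dual face if there is `v` with `ν(v) = 1` and `L = {k : ξ_k(v) = 1}`. -/
def IsDualFace {V : Type*} [AddCommGroup V] [Module ℝ V] {m : ℕ}
    (ξ : Fin (m + 1) → V →ₗ[ℝ] ℝ) (L : Finset (Fin (m + 1))) : Prop :=
  ∃ v : V, nu ξ v = 1 ∧ ∀ k, k ∈ L ↔ ξ k v = 1

/-- `H_L = {u : ξ_k(u) = ξ_ℓ(u) for all k, ℓ ∈ L}`. -/
def HL {V : Type*} [AddCommGroup V] [Module ℝ V] {m : ℕ}
    (ξ : Fin (m + 1) → V →ₗ[ℝ] ℝ) (L : Finset (Fin (m + 1))) : Set V :=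
  {u : V | ∀ k ∈ L, ∀ l ∈ L, ξ k u = ξ l u}

/-!
If `w ∈ H_L`, all `ξ_ℓ` with `ℓ ∈ L` agree on `w`, so `ν_L` is translated by a constant and
the identity holds. Conversely, for `k ∈ L` take `u` exposing the facet `A_k`
(`ξ_k(u) = 1 > ξ_ℓ(u)` for `ℓ ≠ k`): for large `t` the maximum defining both `ν_L(t u − w)`
and `ν_L(t u)` is attained only at `k`, and the identity at `t u` reads
`ξ_k(w) = −ν_L(−w)`, a value independent of `k`.
-/

open Filter

section

variable {V : Type*} [AddCommGroup V] [Module ℝ V] {m : ℕ} (ξ : Fin (m + 1) → V →ₗ[ℝ] ℝ)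
  {L : Finset (Fin (m + 1))}

lemma nuL_of_nonempty (hL : L.Nonempty) (u : V) : nuL ξ L u = L.sup' hL fun ℓ => ξ ℓ u :=
  dif_pos hL

lemma nuL_zero : nuL ξ L 0 = 0 := by
  unfold nuL
  split_ifs <;> simp

lemma nuL_sub_of_mem_HL {w : V} (hw : w ∈ HL ξ L) {k : Fin (m + 1)} (hk : k ∈ L) (u : V) :
    nuL ξ L (u - w) = nuL ξ L u - ξ k w := by
  have hL : L.Nonempty := ⟨k, hk⟩
  rw [nuL_of_nonempty ξ hL, nuL_of_nonempty ξ hL, sub_eq_add_neg (L.sup' _ _), Finset.sup'_add]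
  exact Finset.sup'_congr _ rfl fun l hl => by rw [map_sub, hw l hl k hk, sub_eq_add_neg]

theorem nuL_sub_sub_nuL_neg_of_mem_HL {w : V} (hw : w ∈ HL ξ L) (u : V) :
    nuL ξ L (u - w) - nuL ξ L (-w) = nuL ξ L u := by
  rcases L.eq_empty_or_nonempty with rfl | ⟨k, hk⟩
  · simp [nuL]
  · rw [← zero_sub w, nuL_sub_of_mem_HL ξ hw hk, nuL_sub_of_mem_HL ξ hw hk, nuL_zero]
    ring

lemma eventually_nuL_smul_sub {k : Fin (m + 1)} (hk : k ∈ L) {u : V} (hu : ξ k u = 1)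
    (hlt : ∀ l, l ≠ k → ξ l u < 1) (w : V) :
    ∀ᶠ t : ℝ in atTop, nuL ξ L (t • u - w) = t - ξ k w := by
  have hle : ∀ l ∈ L, ∀ᶠ t : ℝ in atTop, ξ l (t • u - w) ≤ t - ξ k w := by
    intro l _
    rcases eq_or_ne l k with rfl | hne
    · simp [hu]
    · have hgap : 0 < 1 - ξ l u := sub_pos.2 (hlt l hne)
      filter_upwards [(tendsto_id.atTop_mul_const hgap).eventually_ge_atTop (ξ k w - ξ l w)]
        with t ht
      simp only [id, map_sub, map_smul, smul_eq_mul] at ht ⊢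
      linarith
  filter_upwards [(eventually_all_finset L).2 hle] with t ht
  rw [nuL_of_nonempty ξ ⟨k, hk⟩]
  exact le_antisymm (Finset.sup'_le _ _ ht) (Finset.le_sup'_of_le _ hk (by simp [hu]))

lemma apply_eq_neg_nuL_neg_of_translation {w : V}
    (h : ∀ u : V, nuL ξ L (u - w) - nuL ξ L (-w) = nuL ξ L u) {k : Fin (m + 1)} (hk : k ∈ L)
    {u : V} (hu : ξ k u = 1) (hlt : ∀ l, l ≠ k → ξ l u < 1) :
    ξ k w = -nuL ξ L (-w) := by
  obtain ⟨t, htw, ht⟩ := ((eventually_nuL_smul_sub ξ hk hu hlt w).and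
    (eventually_nuL_smul_sub ξ hk hu hlt 0)).exists
  rw [sub_zero, map_zero, sub_zero] at ht
  linarith [h (t • u)]

end

theorem nuL_translation_stabilizer_general
    {V : Type*} [NormedAddCommGroup V] [InnerProductSpace ℝ V]
    {m : ℕ} (ξ : Fin (m + 1) → V →ₗ[ℝ] ℝ)
    (hfacet : ∀ k, ∃ u : V, ξ k u = 1 ∧ ∀ l, l ≠ k → ξ l u < 1)
    (L : Finset (Fin (m + 1))) (w : V) :
    (∀ u : V, nuL ξ L (u - w) - nuL ξ L (-w) = nuL ξ L u) ↔ w ∈ HL ξ L := by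
  refine ⟨fun h k hk l hl => ?_, fun hw => nuL_sub_sub_nuL_neg_of_mem_HL ξ hw⟩
  obtain ⟨u, hu, hlt⟩ := hfacet k
  obtain ⟨u', hu', hlt'⟩ := hfacet l
  rw [apply_eq_neg_nuL_neg_of_translation ξ h hk hu hlt,
    apply_eq_neg_nuL_neg_of_translation ξ h hl hu' hlt']

/-- Let `L ⊆ K` be a dual face and `w ∈ V`. Then
`ν_L(u − w) − ν_L(−w) = ν_L(u)` holds for all `u ∈ V` if and only if `w ∈ H_L`. -/
theorem nuL_translation_stabilizer
    {V : Type*} [NormedAddCommGroup V] [InnerProductSpace ℝ V] [FiniteDimensional ℝ V]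
    {m : ℕ} (ξ : Fin (m + 1) → V →ₗ[ℝ] ℝ)
    (hfacet : ∀ k, ∃ u : V, ξ k u = 1 ∧ ∀ l, l ≠ k → ξ l u < 1)
    (hpos : ∀ u : V, u ≠ 0 → 0 < nu ξ u)
    (L : Finset (Fin (m + 1))) (hL : IsDualFace ξ L) (w : V) :
    (∀ u : V, nuL ξ L (u - w) - nuL ξ L (-w) = nuL ξ L u) ↔ w ∈ HL ξ L :=
  nuL_translation_stabilizer_general ξ hfacet L w
end

section
/- Let L ⊆ K be a dual face. Then there exists a linear subspace W ⊆ V such that V is the direct sum of H_L and W (i.e. H_L ∩ W = {0} and H_L + W = V) and such that ν_L(w) > 0 for every nonzero w ∈ W (so that the restriction of ν_L to W is an asymmetric norm on W). -/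
open Bornology

/-!
Put `s = ∑_{ℓ ∈ L} ξ_ℓ`. A vector `v₀` with `ν(v₀) = 1` exposing `L` lies in `H_L` and has
`s(v₀) = #L ≠ 0`, so `H_L + ker s = V`, and `H_L` has a complement `W` inside `ker s`. On `ker s`
the functional `ν_L` is positive off `H_L`: if `ν_L(w) ≤ 0` and `s(w) = 0`, every `ξ_ℓ(w)`
vanishes, so `w ∈ H_L`.
-/

open Submodule

theorem codisjoint_ker_of_mem_of_apply_ne_zero {K V : Type*} [Field K] [AddCommGroup V]
    [Module K V] {f : V →ₗ[K] K} {H : Submodule K V} {v : V} (hv : v ∈ H) (hfv : f v ≠ 0) :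
    Codisjoint (LinearMap.ker f) H :=
  codisjoint_iff.mpr <| top_unique <| by
    rw [← LinearMap.span_singleton_sup_ker_eq_top f hfv, sup_comm]
    exact sup_le_sup_left ((span_singleton_le_iff_mem v H).mpr hv) _

section

variable {V : Type*} [AddCommGroup V] [Module ℝ V] {m : ℕ} (ξ : Fin (m + 1) → V →ₗ[ℝ] ℝ)
  (L : Finset (Fin (m + 1)))

def hlSubmodule : Submodule ℝ V where
  carrier := HL ξ L
  add_mem' {a b} ha hb k hk l hl := by simp only [map_add, ha k hk l hl, hb k hk l hl]
  zero_mem' _ _ _ _ := by simp only [map_zero]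
  smul_mem' c a ha k hk l hl := by simp only [map_smul, ha k hk l hl]

variable {ξ L}

theorem mem_HL_of_forall_eq {v : V} (c : ℝ) (h : ∀ ℓ ∈ L, ξ ℓ v = c) : v ∈ HL ξ L :=
  fun k hk l hl => by rw [h k hk, h l hl]

theorem IsDualFace.nonempty (hL : IsDualFace ξ L) : L.Nonempty := by
  obtain ⟨v, hν, hvL⟩ := hL
  obtain ⟨k, -, hk⟩ := Finset.exists_mem_eq_sup' Finset.univ_nonempty fun k => ξ k v
  exact ⟨k, (hvL k).mpr (hk ▸ hν)⟩

theorem IsDualFace.exists_forall_eq_one (hL : IsDualFace ξ L) : ∃ v : V, ∀ ℓ ∈ L, ξ ℓ v = 1 :=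
  let ⟨v, _, hvL⟩ := hL
  ⟨v, fun ℓ hℓ => (hvL ℓ).mp hℓ⟩

theorem forall_eq_zero_of_nuL_nonpos_of_sum_eq_zero (hL : L.Nonempty) {w : V}
    (hν : nuL ξ L w ≤ 0) (hs : ∑ ℓ ∈ L, ξ ℓ w = 0) : ∀ ℓ ∈ L, ξ ℓ w = 0 := by
  rw [nuL, dif_pos hL, Finset.sup'_le_iff] at hν
  exact (Finset.sum_eq_zero_iff_of_nonpos hν).mp hs

theorem nuL_pos_of_disjoint_hlSubmodule (hL : L.Nonempty) {W : Submodule ℝ V}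
    (hWs : W ≤ LinearMap.ker (∑ ℓ ∈ L, ξ ℓ)) (hWH : Disjoint W (hlSubmodule ξ L)) {w : V}
    (hw : w ∈ W) (hw0 : w ≠ 0) : 0 < nuL ξ L w := by
  by_contra! hν
  have hs : ∑ ℓ ∈ L, ξ ℓ w = 0 := by
    simpa only [LinearMap.mem_ker, LinearMap.sum_apply] using hWs hw
  have hwH : w ∈ HL ξ L :=
    mem_HL_of_forall_eq 0 (forall_eq_zero_of_nuL_nonpos_of_sum_eq_zero hL hν hs)
  exact hw0 (disjoint_def.mp hWH w hw hwH)

end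

theorem exists_complement_on_which_nuL_is_norm_general
    {V : Type*} [NormedAddCommGroup V] [InnerProductSpace ℝ V]
    {m : ℕ} (ξ : Fin (m + 1) → V →ₗ[ℝ] ℝ)
    (L : Finset (Fin (m + 1))) (hL : IsDualFace ξ L) :
    ∃ W : Submodule ℝ V,
      (∀ v : V, v ∈ HL ξ L → v ∈ W → v = 0) ∧
      (∀ v : V, ∃ h w : V, h ∈ HL ξ L ∧ w ∈ W ∧ v = h + w) ∧
      (∀ w : V, w ∈ W → w ≠ 0 → 0 < nuL ξ L w) := by
  obtain ⟨v₀, hv₀⟩ := hL.exists_forall_eq_one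
  have hsv₀ : (∑ ℓ ∈ L, ξ ℓ) v₀ ≠ 0 := by
    simpa [Finset.sum_congr rfl hv₀] using hL.nonempty.ne_empty
  have hv₀H : v₀ ∈ hlSubmodule ξ L := mem_HL_of_forall_eq 1 hv₀
  obtain ⟨W, hWs, hWH⟩ := (codisjoint_ker_of_mem_of_apply_ne_zero hv₀H hsv₀).exists_isCompl
  refine ⟨W, fun v hvH hvW => disjoint_def.mp hWH.disjoint v hvW hvH, fun v => ?_,
    fun w => nuL_pos_of_disjoint_hlSubmodule hL.nonempty hWs hWH.disjoint⟩
  obtain ⟨h, w, hh, hw, rfl⟩ := codisjoint_iff_exists_add_eq.mp hWH.symm.codisjoint v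
  exact ⟨h, w, hh, hw, rfl⟩

/-- Let `L ⊆ K` be a dual face. Then there is a linear subspace `W ⊆ V`
with `V = H_L ⊕ W` (that is, `H_L ∩ W = {0}` and `H_L + W = V`) such that `ν_L` is positive
on all nonzero vectors of `W`, i.e. `ν_L` restricts to an asymmetric norm on `W`. -/
theorem exists_complement_on_which_nuL_is_norm
    {V : Type*} [NormedAddCommGroup V] [InnerProductSpace ℝ V] [FiniteDimensional ℝ V]
    {m : ℕ} (ξ : Fin (m + 1) → V →ₗ[ℝ] ℝ)
    (hfacet : ∀ k, ∃ u : V, ξ k u = 1 ∧ ∀ l, l ≠ k → ξ l u < 1)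
    (hpos : ∀ u : V, u ≠ 0 → 0 < nu ξ u)
    (L : Finset (Fin (m + 1))) (hL : IsDualFace ξ L) :
    ∃ W : Submodule ℝ V,
      (∀ v : V, v ∈ HL ξ L → v ∈ W → v = 0) ∧
      (∀ v : V, ∃ h w : V, h ∈ HL ξ L ∧ w ∈ W ∧ v = h + w) ∧
      (∀ w : V, w ∈ W → w ≠ 0 → 0 < nuL ξ L w) :=
  exists_complement_on_which_nuL_is_norm_general ξ L hL
end

section
/- Let p, w ∈ V and put K(w) = {ℓ ∈ K : ξ_ℓ(w) = ν(w)}. Then the family of functions u ↦ ν(p + t·w − u) − ν(p + t·w) converges, as t → ∞, to the function u ↦ ν_{K(w)}(p − u) − ν_{K(w)}(p), uniformly on every bounded subset of V; that is, for every R > 0 and ε > 0 there is T such that for all t ≥ T and all u ∈ V with ‖u‖ ≤ R one has |ν(p + t·w − u) − ν(p + t·w) − (ν_{K(w)}(p − u) − ν_{K(w)}(p))| < ε. -/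
open Bornology

open Classical in
/-- `K(w) = {ℓ ∈ K : ξ_ℓ(w) = ν(w)}`. -/
noncomputable def Kface {V : Type*} [AddCommGroup V] [Module ℝ V] {m : ℕ}
    (ξ : Fin (m + 1) → V →ₗ[ℝ] ℝ) (w : V) : Finset (Fin (m + 1)) :=
  Finset.univ.filter fun ℓ => ξ ℓ w = nu ξ w

/-!
The convergence is in fact eventual equality. Each `ξ_ℓ` with `ℓ ∉ K(w)` falls behind the
maximum along the ray by `t·(ν(w) − ξ_ℓ(w))`, which grows linearly in `t`, while on a bounded set
all `ξ_k` are bounded by some `C`. So once `t` is large, only the functionals in `K(w)` can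
realise the maximum at `x + t•w`, and these all equal `ξ_k(x) + t·ν(w)` there; hence
`ν(x + t•w) = t·ν(w) + ν_{K(w)}(x)` for all `x` in the bounded set, and the `t·ν(w)` cancels
in the difference.
-/

open Filter

section Polyhedral

variable {V : Type*} [AddCommGroup V] [Module ℝ V] {m : ℕ} (ξ : Fin (m + 1) → V →ₗ[ℝ] ℝ)

lemma le_nu (k : Fin (m + 1)) (u : V) : ξ k u ≤ nu ξ u :=
  Finset.le_sup' (fun k => ξ k u) (Finset.mem_univ k)

lemma le_nuL {L : Finset (Fin (m + 1))} {k : Fin (m + 1)} (hk : k ∈ L) (u : V) :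
    ξ k u ≤ nuL ξ L u := by
  rw [nuL, dif_pos ⟨k, hk⟩]
  exact Finset.le_sup' (fun k => ξ k u) hk

lemma nu_eq_nuL_of_forall_notMem_le {L : Finset (Fin (m + 1))} (hL : L.Nonempty) {u : V}
    (h : ∀ k ∉ L, ξ k u ≤ nuL ξ L u) : nu ξ u = nuL ξ L u := by
  refine le_antisymm (Finset.sup'_le _ _ fun k _ => ?_) ?_
  · by_cases hk : k ∈ L
    · exact le_nuL ξ hk u
    · exact h k hk
  · rw [nuL, dif_pos hL]
    exact Finset.sup'_le _ _ fun k _ => le_nu ξ k u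

lemma mem_Kface {w : V} {ℓ : Fin (m + 1)} : ℓ ∈ Kface ξ w ↔ ξ ℓ w = nu ξ w := by
  simp [Kface]

lemma Kface_nonempty (w : V) : (Kface ξ w).Nonempty := by
  obtain ⟨k, -, hk⟩ := Finset.exists_mem_eq_sup' Finset.univ_nonempty fun k => ξ k w
  exact ⟨k, (mem_Kface ξ).2 hk.symm⟩

lemma nuL_Kface_add_smul (w x : V) (t : ℝ) :
    nuL ξ (Kface ξ w) (x + t • w) = t * nu ξ w + nuL ξ (Kface ξ w) x := by
  rw [nuL, nuL, dif_pos (Kface_nonempty ξ w), dif_pos (Kface_nonempty ξ w), Finset.add_sup']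
  refine Finset.sup'_congr _ rfl fun k hk => ?_
  simp [(mem_Kface ξ).1 hk, add_comm]

lemma nu_add_smul_eq {w x : V} {t C : ℝ} (hx : ∀ k, |ξ k x| ≤ C)
    (ht : ∀ ℓ ∉ Kface ξ w, 2 * C ≤ t * (nu ξ w - ξ ℓ w)) :
    nu ξ (x + t • w) = t * nu ξ w + nuL ξ (Kface ξ w) x := by
  rw [← nuL_Kface_add_smul]
  refine nu_eq_nuL_of_forall_notMem_le ξ (Kface_nonempty ξ w) fun k hk => ?_
  obtain ⟨k₀, hk₀⟩ := Kface_nonempty ξ w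
  have hgap := ht k hk
  have hk₀x := le_nuL ξ hk₀ x
  have hkx := (abs_le.1 (hx k)).2
  have hk₀x' := (abs_le.1 (hx k₀)).1
  rw [nuL_Kface_add_smul, map_add, map_smul, smul_eq_mul]
  linarith

lemma eventually_nu_add_smul_eq (w : V) (C : ℝ) :
    ∀ᶠ t in atTop, ∀ x, (∀ k, |ξ k x| ≤ C) →
      nu ξ (x + t • w) = t * nu ξ w + nuL ξ (Kface ξ w) x := by
  have hgaps : ∀ᶠ t in atTop, ∀ ℓ ∉ Kface ξ w, 2 * C ≤ t * (nu ξ w - ξ ℓ w) := by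
    refine eventually_all.2 fun ℓ => ?_
    by_cases hℓ : ℓ ∈ Kface ξ w
    · exact Eventually.of_forall fun _ h => absurd hℓ h
    · have hgap : 0 < nu ξ w - ξ ℓ w :=
        sub_pos.2 ((le_nu ξ ℓ w).lt_of_ne (mt (mem_Kface ξ).2 hℓ))
      filter_upwards [(tendsto_id.atTop_mul_const hgap).eventually_ge_atTop (2 * C)]
        with t ht _ using ht
  filter_upwards [hgaps] with t ht x hx using nu_add_smul_eq ξ hx ht

end Polyhedral

lemma eventually_nu_add_smul_eq_of_norm_le {V : Type*} [NormedAddCommGroup V]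
    [NormedSpace ℝ V] [FiniteDimensional ℝ V] {m : ℕ} (ξ : Fin (m + 1) → V →ₗ[ℝ] ℝ)
    (w : V) (r : ℝ) :
    ∀ᶠ t in atTop, ∀ x, ‖x‖ ≤ r → nu ξ (x + t • w) = t * nu ξ w + nuL ξ (Kface ξ w) x := by
  let M := ∑ k, ‖LinearMap.toContinuousLinearMap (ξ k)‖
  filter_upwards [eventually_nu_add_smul_eq ξ w (M * r)] with t ht x hx
  refine ht x fun k => ?_
  calc |ξ k x| = ‖LinearMap.toContinuousLinearMap (ξ k) x‖ := rfl
    _ ≤ ‖LinearMap.toContinuousLinearMap (ξ k)‖ * ‖x‖ := ContinuousLinearMap.le_opNorm _ _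
    _ ≤ M * r :=
      mul_le_mul (Finset.single_le_sum (f := fun k => ‖LinearMap.toContinuousLinearMap (ξ k)‖)
        (fun k _ => norm_nonneg _) (Finset.mem_univ k)) hx
        (norm_nonneg x) (Finset.sum_nonneg fun _ _ => norm_nonneg _)

theorem horofunction_limit_along_ray_general
    {V : Type*} [NormedAddCommGroup V] [InnerProductSpace ℝ V] [FiniteDimensional ℝ V]
    {m : ℕ} (ξ : Fin (m + 1) → V →ₗ[ℝ] ℝ)
    (p w : V) :
    ∀ R > (0 : ℝ), ∀ ε > (0 : ℝ), ∃ T : ℝ, ∀ t : ℝ, T ≤ t → ∀ u : V, ‖u‖ ≤ R →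
      |nu ξ (p + t • w - u) - nu ξ (p + t • w) -
        (nuL ξ (Kface ξ w) (p - u) - nuL ξ (Kface ξ w) p)| < ε := by
  intro R _ ε hε
  obtain ⟨T, hT⟩ := eventually_atTop.1 (eventually_nu_add_smul_eq_of_norm_le ξ w (‖p‖ + R))
  refine ⟨T, fun t ht u hu => ?_⟩
  have hpu : ‖p - u‖ ≤ ‖p‖ + R := (norm_sub_le p u).trans (by linarith)
  have hp : ‖p‖ ≤ ‖p‖ + R := by linarith [norm_nonneg u]
  rw [show p + t • w - u = (p - u) + t • w by abel, hT t ht _ hpu, hT t ht p hp]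
  simpa using hε

/-- Let `p, w ∈ V` and `K(w) = {ℓ : ξ_ℓ(w) = ν(w)}`. Then the functions
`u ↦ ν(p + t•w − u) − ν(p + t•w)` converge, as `t → ∞`, to
`u ↦ ν_{K(w)}(p − u) − ν_{K(w)}(p)`, uniformly on every bounded subset of `V`. -/
theorem horofunction_limit_along_ray
    {V : Type*} [NormedAddCommGroup V] [InnerProductSpace ℝ V] [FiniteDimensional ℝ V]
    {m : ℕ} (ξ : Fin (m + 1) → V →ₗ[ℝ] ℝ)
    (hfacet : ∀ k, ∃ u : V, ξ k u = 1 ∧ ∀ l, l ≠ k → ξ l u < 1)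
    (hpos : ∀ u : V, u ≠ 0 → 0 < nu ξ u)
    (p w : V) :
    ∀ R > (0 : ℝ), ∀ ε > (0 : ℝ), ∃ T : ℝ, ∀ t : ℝ, T ≤ t → ∀ u : V, ‖u‖ ≤ R →
      |nu ξ (p + t • w - u) - nu ξ (p + t • w) -
        (nuL ξ (Kface ξ w) (p - u) - nuL ξ (Kface ξ w) p)| < ε :=
  horofunction_limit_along_ray_general ξ p w
end

section
/- Let L ⊆ K be a dual face or L = K, and define c_L : V → V^∨ (the dual space of V) by c_L(p) = (Σ_{ℓ∈L} exp(ξ_ℓ(p))·ξ_ℓ) / (Σ_{ℓ∈L} exp(ξ_ℓ(p))). Then for all p, q ∈ V with p − q ∉ H_L one has (c_L(q) − c_L(p))(q − p) > 0; consequently, c_L(p) = c_L(q) if and only if p − q ∈ H_L. -/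
open Bornology

/-- The generalized moment map
`c_L(p) = (∑_{ℓ∈L} exp(ξ_ℓ(p))·ξ_ℓ) / (∑_{ℓ∈L} exp(ξ_ℓ(p)))`. -/
noncomputable def cL {V : Type*} [AddCommGroup V] [Module ℝ V] {m : ℕ}
    (ξ : Fin (m + 1) → V →ₗ[ℝ] ℝ) (L : Finset (Fin (m + 1))) (p : V) : V →ₗ[ℝ] ℝ :=
  (∑ ℓ ∈ L, Real.exp (ξ ℓ p))⁻¹ • ∑ ℓ ∈ L, Real.exp (ξ ℓ p) • ξ ℓ

/-!
Write `q = p + x`, `w_ℓ = exp ξ_ℓ(p)` and `t_ℓ = ξ_ℓ(x)`. Then `c_L(p)(x)` and `c_L(q)(x)` are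
the means of `t` for the weights `w` and `w · exp t`, and after clearing denominators their
difference is the weighted Chebyshev sum `½ ∑_{k,l} w_k w_l (e^{t_k} - e^{t_l}) (t_k - t_l)`,
which is positive as soon as `t` is not constant on `L`, i.e. `x ∉ H_L`. Conversely, translating
`p` by an element of `H_L` multiplies every weight by the same factor, which leaves `c_L` unchanged.
-/

theorem StrictMono.sub_mul_sub_pos {R : Type*} [CommRing R] [LinearOrder R]
    [IsStrictOrderedRing R] {φ : R → R} (hφ : StrictMono φ) {a b : R} (hab : a ≠ b) :
    0 < (φ a - φ b) * (a - b) := by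
  rcases hab.lt_or_gt with h | h
  · exact mul_pos_of_neg_of_neg (sub_neg.2 (hφ h)) (sub_neg.2 h)
  · exact mul_pos (sub_pos.2 (hφ h)) (sub_pos.2 h)

theorem Monotone.sub_mul_sub_nonneg {R : Type*} [CommRing R] [LinearOrder R]
    [IsStrictOrderedRing R] {φ : R → R} (hφ : Monotone φ) (a b : R) :
    0 ≤ (φ a - φ b) * (a - b) := by
  rcases le_total a b with h | h
  · exact mul_nonneg_of_nonpos_of_nonpos (sub_nonpos.2 (hφ h)) (sub_nonpos.2 h)
  · exact mul_nonneg (sub_nonneg.2 (hφ h)) (sub_nonneg.2 h)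

/-- Strict weighted Chebyshev sum inequality for `g` and `φ ∘ g`. -/
theorem Finset.sum_mul_sum_lt_sum_mul_sum_of_strictMono {ι R : Type*} [CommRing R]
    [LinearOrder R] [IsStrictOrderedRing R] {s : Finset ι} {w g : ι → R} {φ : R → R}
    (hφ : StrictMono φ) (hw : ∀ i ∈ s, 0 < w i) (hg : ∃ i ∈ s, ∃ j ∈ s, g i ≠ g j) :
    (∑ i ∈ s, w i * g i) * ∑ i ∈ s, w i * φ (g i) <
      (∑ i ∈ s, w i * φ (g i) * g i) * ∑ i ∈ s, w i := by
  obtain ⟨i₀, hi₀, j₀, hj₀, hg₀⟩ := hg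
  set D : ι → ι → R := fun i j => w i * φ (g i) * g i * w j - w i * g i * (w j * φ (g j))
  have hdiff : (∑ i ∈ s, w i * φ (g i) * g i) * ∑ i ∈ s, w i -
      (∑ i ∈ s, w i * g i) * ∑ i ∈ s, w i * φ (g i) = ∑ i ∈ s, ∑ j ∈ s, D i j := by
    simp only [D, sum_mul_sum, ← sum_sub_distrib]
  have hsymm : ∀ i j, D i j + D j i = w i * w j * ((φ (g i) - φ (g j)) * (g i - g j)) := by
    intro i j
    ring
  have hterm : ∀ i ∈ s, ∀ j ∈ s, 0 ≤ D i j + D j i := fun i hi j hj => by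
    rw [hsymm]
    exact mul_nonneg (mul_pos (hw i hi) (hw j hj)).le (hφ.monotone.sub_mul_sub_nonneg _ _)
  have hpos : 0 < ∑ i ∈ s, ∑ j ∈ s, (D i j + D j i) := by
    refine sum_pos' (fun i hi => sum_nonneg (hterm i hi)) ⟨i₀, hi₀, ?_⟩
    refine sum_pos' (hterm i₀ hi₀) ⟨j₀, hj₀, ?_⟩
    rw [hsymm]
    exact mul_pos (mul_pos (hw i₀ hi₀) (hw j₀ hj₀)) (hφ.sub_mul_sub_pos hg₀)
  have htwice : ∑ i ∈ s, ∑ j ∈ s, (D i j + D j i) = 2 * ∑ i ∈ s, ∑ j ∈ s, D i j := by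
    simp only [two_mul, sum_add_distrib]
    rw [sum_comm (f := fun i j => D j i)]
  rw [← sub_pos, hdiff]
  rw [htwice] at hpos
  linarith

section MomentMap

variable {V : Type*} [AddCommGroup V] [Module ℝ V] {m : ℕ} (ξ : Fin (m + 1) → V →ₗ[ℝ] ℝ)
  (L : Finset (Fin (m + 1)))

theorem cL_apply (p x : V) :
    cL ξ L p x = (∑ ℓ ∈ L, Real.exp (ξ ℓ p))⁻¹ * ∑ ℓ ∈ L, Real.exp (ξ ℓ p) * ξ ℓ x := by
  simp [cL, LinearMap.sum_apply]

theorem cL_sub_cL_apply_sub_pos {p q : V} (h : p - q ∉ HL ξ L) :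
    0 < (cL ξ L q - cL ξ L p) (q - p) := by
  obtain ⟨i, hi, j, hj, hij⟩ : ∃ i ∈ L, ∃ j ∈ L, ξ i (q - p) ≠ ξ j (q - p) := by
    simp only [HL, Set.mem_ofPred_eq, not_forall] at h
    obtain ⟨i, hi, j, hj, hij⟩ := h
    exact ⟨i, hi, j, hj, fun e => hij (by rw [← neg_sub q p, map_neg, map_neg, e])⟩
  have hexp_q : ∀ ℓ, Real.exp (ξ ℓ q) = Real.exp (ξ ℓ p) * Real.exp (ξ ℓ (q - p)) := by
    intro ℓ
    rw [← Real.exp_add, ← map_add, add_sub_cancel]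
  have hsum_pos : ∀ r : V, 0 < ∑ ℓ ∈ L, Real.exp (ξ ℓ r) :=
    fun r => Finset.sum_pos (fun ℓ _ => Real.exp_pos _) ⟨i, hi⟩
  rw [LinearMap.sub_apply, cL_apply, cL_apply, sub_pos, inv_mul_eq_div, inv_mul_eq_div,
    div_lt_div_iff₀ (hsum_pos p) (hsum_pos q)]
  simp only [hexp_q]
  exact Finset.sum_mul_sum_lt_sum_mul_sum_of_strictMono (g := fun ℓ => ξ ℓ (q - p))
    Real.exp_strictMono (fun ℓ _ => Real.exp_pos (ξ ℓ p)) ⟨i, hi, j, hj, hij⟩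

theorem cL_eq_of_sub_mem_HL {p q : V} (h : p - q ∈ HL ξ L) : cL ξ L p = cL ξ L q := by
  rcases L.eq_empty_or_nonempty with rfl | ⟨l₀, hl₀⟩
  · simp [cL]
  have hexp_p : ∀ ℓ ∈ L, Real.exp (ξ ℓ p) = Real.exp (ξ l₀ (p - q)) * Real.exp (ξ ℓ q) := by
    intro ℓ hℓ
    rw [← Real.exp_add, h l₀ hl₀ ℓ hℓ, ← map_add, sub_add_cancel]
  have hsum :
      ∑ ℓ ∈ L, Real.exp (ξ ℓ p) = Real.exp (ξ l₀ (p - q)) * ∑ ℓ ∈ L, Real.exp (ξ ℓ q) := by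
    rw [Finset.mul_sum]
    exact Finset.sum_congr rfl hexp_p
  have hsum_smul : ∑ ℓ ∈ L, Real.exp (ξ ℓ p) • ξ ℓ =
      Real.exp (ξ l₀ (p - q)) • ∑ ℓ ∈ L, Real.exp (ξ ℓ q) • ξ ℓ := by
    rw [Finset.smul_sum]
    exact Finset.sum_congr rfl fun ℓ hℓ => by rw [hexp_p ℓ hℓ, smul_smul]
  rw [cL, cL, hsum, hsum_smul, smul_smul, mul_inv_rev,
    inv_mul_cancel_right₀ (Real.exp_pos _).ne']

end MomentMap

theorem moment_map_strict_monotonicity_general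
    {V : Type*} [NormedAddCommGroup V] [InnerProductSpace ℝ V]
    {m : ℕ} (ξ : Fin (m + 1) → V →ₗ[ℝ] ℝ)
    (L : Finset (Fin (m + 1))) :
    (∀ p q : V, p - q ∉ HL ξ L → 0 < (cL ξ L q - cL ξ L p) (q - p)) ∧
    (∀ p q : V, cL ξ L p = cL ξ L q ↔ p - q ∈ HL ξ L) := by
  refine ⟨fun p q => cL_sub_cL_apply_sub_pos ξ L,
    fun p q => ⟨fun heq => ?_, cL_eq_of_sub_mem_HL ξ L⟩⟩
  by_contra h
  simpa [heq] using cL_sub_cL_apply_sub_pos ξ L h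

/-- Let `L ⊆ K` be a dual face or `L = K`. Then for all `p, q ∈ V` with
`p − q ∉ H_L` one has `(c_L(q) − c_L(p))(q − p) > 0`; consequently `c_L(p) = c_L(q)` if and
only if `p − q ∈ H_L`. -/
theorem moment_map_strict_monotonicity
    {V : Type*} [NormedAddCommGroup V] [InnerProductSpace ℝ V] [FiniteDimensional ℝ V]
    {m : ℕ} (ξ : Fin (m + 1) → V →ₗ[ℝ] ℝ)
    (hfacet : ∀ k, ∃ u : V, ξ k u = 1 ∧ ∀ l, l ≠ k → ξ l u < 1)
    (hpos : ∀ u : V, u ≠ 0 → 0 < nu ξ u)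
    (L : Finset (Fin (m + 1))) (hL : IsDualFace ξ L ∨ L = Finset.univ) :
    (∀ p q : V, p - q ∉ HL ξ L → 0 < (cL ξ L q - cL ξ L p) (q - p)) ∧
    (∀ p q : V, cL ξ L p = cL ξ L q ↔ p - q ∈ HL ξ L) :=
  moment_map_strict_monotonicity_general ξ L
end
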